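/- arXiv:2106.15961 — 4 statements merged into one kernel-verified Lean document; each statement's English description precedes it below -/
import Mathlib

section
/- Let G be an equilibrium graph in the max-distance network creation game, let a, b be two distinct vertices where a buys an edge (a,a₁). If there exists a shortest path tree T of G rooted at b such that either (a,a₁) is not an edge of T or a₁ is the parent of a in T, then D(a) ≤ D(b) + 1, where D(v) denotes the eccentricity max_u d_G(u,v). -/
/-!
Max-distance network creation game (Demaine et al.):
`n` agents, agent `v` buys edges to the agents in `s v`, each at cost `α`.
The resulting graph has an edge `(u,v)` iff `u ∈ s v` or `v ∈ s u`.
Agent `v`'s cost is `α * |s v|` plus its eccentricity (max distance, `⊤` if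
disconnected). A profile is a (pure Nash) equilibrium if no agent can strictly
decrease its cost by unilaterally changing its edge set.
-/

open SimpleGraph
open scoped ENNReal

namespace NCG

/-- The undirected graph created by strategy profile `s`. -/
def graph (n : ℕ) (s : Fin n → Finset (Fin n)) : SimpleGraph (Fin n) :=
  SimpleGraph.fromRel (fun u v => v ∈ s u)

/-- Eccentricity `D(v) = max_u d_G(v,u)`, valued in `ℕ∞`. -/
noncomputable def ecc {n : ℕ} (G : SimpleGraph (Fin n)) (v : Fin n) : ℕ∞ :=
  ⨆ u, G.edist v u

/-- The cost of agent `v` under profile `s`: `α·|s v| + D(v)` (infinite if the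
graph is disconnected). -/
noncomputable def cost {n : ℕ} (α : ℝ) (s : Fin n → Finset (Fin n)) (v : Fin n) : ℝ≥0∞ :=
  ENNReal.ofReal α * (s v).card + (ecc (graph n s) v : ℝ≥0∞)

/-- Pure Nash equilibrium: no agent can strictly decrease its cost by a
unilateral deviation. -/
def IsEquilibrium {n : ℕ} (α : ℝ) (s : Fin n → Finset (Fin n)) : Prop :=
  ∀ (v : Fin n) (t : Finset (Fin n)), cost α s v ≤ cost α (Function.update s v t) v

/-- Radius `rad(G) = min_v D(v)`. -/
noncomputable def radius {n : ℕ} (G : SimpleGraph (Fin n)) : ℕ∞ :=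
  ⨅ v, ecc G v

/-- Diameter `diam(G) = max_v D(v)`. -/
noncomputable def diam {n : ℕ} (G : SimpleGraph (Fin n)) : ℕ∞ :=
  ⨆ v, ecc G v

/-- Interpret an extended natural number as a real number (`⊤ ↦ 0`). -/
noncomputable def entoR (x : ℕ∞) : ℝ := ((x : ℝ≥0∞)).toReal

/-- `T` is a shortest path tree of `G` rooted at `b`: a spanning tree of `G`
preserving all distances from `b`. -/
def IsSPT {n : ℕ} (G T : SimpleGraph (Fin n)) (b : Fin n) : Prop :=
  T ≤ G ∧ T.IsTree ∧ ∀ v, T.edist b v = G.edist b v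

/-- `p` is the parent of `a` in the tree `T` rooted at `b`. -/
def IsParent {n : ℕ} (T : SimpleGraph (Fin n)) (b a p : Fin n) : Prop :=
  T.Adj a p ∧ T.edist b p + 1 = T.edist b a

/-- The vertex set `B` (with more than two vertices) induces a biconnected
subgraph: removing any single vertex leaves it connected. -/
def IsBiconnected {n : ℕ} (G : SimpleGraph (Fin n)) (B : Finset (Fin n)) : Prop :=
  2 < B.card ∧ ∀ v ∈ B, (G.induce ((B : Set (Fin n)) \ {v})).Connected

/-- `B` is (the vertex set of) a biconnected component of `G`: a maximal
biconnected subgraph with more than two vertices. -/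
def IsBicomp {n : ℕ} (G : SimpleGraph (Fin n)) (B : Finset (Fin n)) : Prop :=
  IsBiconnected G B ∧ ∀ B' : Finset (Fin n), B ⊆ B' → IsBiconnected G B' → B' = B

/-- The induced subgraph of `G` on the vertex set `B`. -/
def Hgraph {n : ℕ} (G : SimpleGraph (Fin n)) (B : Finset (Fin n)) :
    SimpleGraph ((B : Set (Fin n))) :=
  G.induce (B : Set (Fin n))

/-- The degree of `v` inside the induced subgraph on `B`. -/
noncomputable def degH {n : ℕ} (G : SimpleGraph (Fin n)) (B : Finset (Fin n)) (v : Fin n) : ℕ :=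
  {u : Fin n | u ∈ B ∧ G.Adj v u}.ncard

/-- A min cycle: a cycle whose internal (cycle) distances agree with the
distances in `G`, i.e. an isometric cycle. -/
def IsMinCycle {n : ℕ} (G : SimpleGraph (Fin n)) {v : Fin n} (c : G.Walk v v) : Prop :=
  c.IsCycle ∧ ∀ x₁ ∈ c.support, ∀ x₂ ∈ c.support,
    c.toSubgraph.spanningCoe.edist x₁ x₂ = G.edist x₁ x₂

/-- A directed cycle: going around the cycle, each vertex buys the edge to its
successor (in one of the two cyclic orientations). -/
def IsDirectedCycle {n : ℕ} (s : Fin n → Finset (Fin n)) {v : Fin n}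
    (c : (graph n s).Walk v v) : Prop :=
  (∀ d ∈ c.darts, d.toProd.2 ∈ s d.toProd.1) ∨ (∀ d ∈ c.darts, d.toProd.1 ∈ s d.toProd.2)

/-- A shopping vertex of the biconnected component `B` w.r.t. the shortest path
tree `T`: a vertex of `B` buying an edge of the component that is not in `T`. -/
def IsShopping {n : ℕ} (s : Fin n → Finset (Fin n)) (T : SimpleGraph (Fin n))
    (B : Finset (Fin n)) (u : Fin n) : Prop :=
  u ∈ B ∧ ∃ w ∈ B, w ∈ s u ∧ (graph n s).Adj u w ∧ ¬ T.Adj u w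

/-- The social cost of profile `s`. -/
noncomputable def socialCost {n : ℕ} (α : ℝ) (s : Fin n → Finset (Fin n)) : ℝ≥0∞ :=
  ∑ v, cost α s v

end NCG

open NCG

/-
Agent `a` swaps its edge to `a₁` for an edge to `b`. Rebuilding the shortest path tree `T`
parent by parent shows that no distance from `b` grows: the only tree edge that could be lost
is `{a, a₁}`, which by hypothesis is either absent from `T` or the edge from `a` to its parent,
and `a` itself is now adjacent to `b`. Hence after the swap `D(a) ≤ 1 + D(b)`, and the swap does
not cost more, so equilibrium gives the same bound before it.
-/

namespace SimpleGraph

variable {V : Type*} {T H : SimpleGraph V} {b u : V}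

lemma exists_adj_edist_add_one_eq (hub : u ≠ b) (hfin : T.edist b u ≠ ⊤) :
    ∃ p, T.Adj u p ∧ T.edist b p + 1 = T.edist b u := by
  obtain ⟨w, hw⟩ := exists_walk_of_edist_ne_top hfin
  cases hrev : w.reverse with
  | nil => exact absurd rfl hub
  | @cons _ p _ hup q =>
    have hlen : w.length = q.length + 1 := by
      simpa using congrArg Walk.length hrev
    refine ⟨p, hup, le_antisymm ?_ ?_⟩
    · calc T.edist b p + 1 ≤ q.length + 1 := by
            rw [edist_comm]; gcongr; exact edist_le q
        _ = T.edist b u := by rw [← hw, hlen]; push_cast; rfl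
    · calc T.edist b u ≤ T.edist b p + T.edist p u := SimpleGraph.edist_triangle
        _ = T.edist b p + 1 := by rw [edist_eq_one_iff_adj.mpr hup.symm]

theorem edist_le_of_parent_step
    (hstep : ∀ u p, T.Adj u p → T.edist b p + 1 = T.edist b u →
      H.edist b u ≤ H.edist b p + 1) (u : V) :
    H.edist b u ≤ T.edist b u := by
  suffices h : ∀ k : ℕ, ∀ u, T.edist b u = k → H.edist b u ≤ k by
    by_cases hfin : T.edist b u = ⊤
    · exact hfin ▸ le_top
    · exact (h _ u (ENat.natCast_toNat hfin).symm).trans (ENat.natCast_toNat hfin).le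
  intro k
  induction k with
  | zero =>
    intro u hu
    obtain rfl : b = u := edist_eq_zero_iff.mp hu
    simp
  | succ k ih =>
    intro u hu
    have hub : u ≠ b := by
      rintro rfl
      rw [edist_self] at hu
      exact absurd hu.symm (by norm_cast)
    obtain ⟨p, hup, hp⟩ := exists_adj_edist_add_one_eq hub (hu ▸ ENat.natCast_ne_top _)
    have hpk : T.edist b p = k := by
      rw [hu] at hp
      exact_mod_cast WithTop.add_right_cancel ENat.one_ne_top hp
    calc H.edist b u ≤ H.edist b p + 1 := hstep u p hup hp
      _ ≤ k + 1 := by gcongr; exact ih p hpk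
      _ = (k + 1 : ℕ) := by push_cast; rfl

end SimpleGraph

namespace NCG

variable {n : ℕ}

lemma ecc_le_edist_add_ecc (G : SimpleGraph (Fin n)) (a b : Fin n) :
    ecc G a ≤ G.edist a b + ecc G b :=
  iSup_le fun u => SimpleGraph.edist_triangle.trans (by gcongr; exact le_iSup (G.edist b) u)

lemma ecc_le_ecc_of_edist_le {G H : SimpleGraph (Fin n)} {b : Fin n}
    (h : ∀ u, H.edist b u ≤ G.edist b u) : ecc H b ≤ ecc G b :=
  iSup_mono h

lemma graph_update_adj_of_adj {s : Fin n → Finset (Fin n)} {t : Finset (Fin n)}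
    {a a₁ u v : Fin n} (ht : (s a).erase a₁ ⊆ t) (huv : (graph n s).Adj u v)
    (hne : s(u, v) ≠ s(a, a₁)) :
    (graph n (Function.update s a t)).Adj u v := by
  have keep : ∀ x y, y ∈ s x → s(x, y) ≠ s(a, a₁) → y ∈ Function.update s a t x := by
    intro x y hy hxy
    rcases eq_or_ne x a with rfl | hxa
    · rw [Function.update_self]
      exact ht (Finset.mem_erase.mpr ⟨fun h => hxy (h ▸ rfl), hy⟩)
    · rwa [Function.update_of_ne hxa]
  rw [graph, SimpleGraph.fromRel_adj] at huv ⊢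
  obtain ⟨huv, hmem | hmem⟩ := huv
  · exact ⟨huv, .inl (keep u v hmem hne)⟩
  · exact ⟨huv, .inr (keep v u hmem (by rwa [Sym2.eq_swap]))⟩

lemma graph_update_adj_of_mem {s : Fin n → Finset (Fin n)} {t : Finset (Fin n)} {a b : Fin n}
    (hab : a ≠ b) (hb : b ∈ t) : (graph n (Function.update s a t)).Adj a b := by
  rw [graph, SimpleGraph.fromRel_adj, Function.update_self]
  exact ⟨hab, .inl hb⟩

lemma IsParent.not_isParent {T : SimpleGraph (Fin n)} (hT : T.Connected) {b u p : Fin n}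
    (hup : IsParent T b u p) : ¬ IsParent T b p u := by
  rintro ⟨-, hpu⟩
  have h := hup.2
  rw [← hpu] at h
  lift T.edist b u to ℕ using SimpleGraph.edist_ne_top_iff_reachable.mpr (hT.preconnected b u)
    with d
  norm_cast at h
  omega

lemma edist_update_le_of_isSPT {s : Fin n → Finset (Fin n)} {t : Finset (Fin n)}
    {T : SimpleGraph (Fin n)} {a b a₁ : Fin n} (hab : a ≠ b) (ht : (s a).erase a₁ ⊆ t)
    (hb : b ∈ t) (hT : IsSPT (graph n s) T b) (ha₁ : ¬ T.Adj a a₁ ∨ IsParent T b a a₁)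
    (u : Fin n) : (graph n (Function.update s a t)).edist b u ≤ (graph n s).edist b u := by
  obtain ⟨hTG, hTtree, hTdist⟩ := hT
  set G' := graph n (Function.update s a t)
  refine (SimpleGraph.edist_le_of_parent_step (fun v p hvp hp => ?_) u).trans_eq (hTdist u)
  rcases eq_or_ne v a with rfl | hva
  · rw [SimpleGraph.edist_comm, SimpleGraph.edist_eq_one_iff_adj.mpr
      (graph_update_adj_of_mem hab hb)]
    exact le_add_self
  have hne : s(v, p) ≠ s(a, a₁) := by
    intro h
    obtain ⟨rfl, rfl⟩ : v = a₁ ∧ p = a := by simpa [hva] using h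
    rcases ha₁ with hna | hpar
    · exact hna hvp.symm
    · exact hpar.not_isParent hTtree.connected ⟨hvp, hp⟩
  have hG'vp : G'.Adj v p := graph_update_adj_of_adj ht (hTG hvp) hne
  calc G'.edist b v ≤ G'.edist b p + G'.edist p v := SimpleGraph.edist_triangle
    _ = G'.edist b p + 1 := by rw [SimpleGraph.edist_eq_one_iff_adj.mpr hG'vp.symm]

theorem IsEquilibrium.ecc_le_of_card_le {α : ℝ} {s : Fin n → Finset (Fin n)}
    (hs : IsEquilibrium α s) {v : Fin n} {t : Finset (Fin n)} (ht : t.card ≤ (s v).card) :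
    ecc (graph n s) v ≤ ecc (graph n (Function.update s v t)) v := by
  have hcost := hs v t
  rw [cost, cost, Function.update_self] at hcost
  have hfin : ENNReal.ofReal α * ((s v).card : ℝ≥0∞) ≠ ⊤ :=
    ENNReal.mul_ne_top ENNReal.ofReal_ne_top (ENNReal.natCast_ne_top _)
  have hprice : ENNReal.ofReal α * (t.card : ℝ≥0∞) ≤ ENNReal.ofReal α * (s v).card := by
    gcongr
  have hecc : (ecc (graph n s) v : ℝ≥0∞) ≤ ecc (graph n (Function.update s v t)) v :=
    (ENNReal.add_le_add_iff_left hfin).mp (hcost.trans (add_le_add hprice le_rfl))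
  exact_mod_cast hecc

end NCG

theorem swap_lemma_general (n : ℕ) (α : ℝ)
    (s : Fin n → Finset (Fin n)) (hs : IsEquilibrium α s)
    (a b a₁ : Fin n) (hab : a ≠ b)
    (hbuy : a₁ ∈ s a)
    (hT : ∃ T : SimpleGraph (Fin n), IsSPT (graph n s) T b ∧
      (¬ T.Adj a a₁ ∨ IsParent T b a a₁)) :
    ecc (graph n s) a ≤ ecc (graph n s) b + 1 := by
  obtain ⟨T, hTspt, ha₁⟩ := hT
  set t := insert b ((s a).erase a₁)
  set G' := graph n (Function.update s a t)
  have hG'ab : G'.edist a b = 1 :=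
    SimpleGraph.edist_eq_one_iff_adj.mpr (graph_update_adj_of_mem hab (Finset.mem_insert_self _ _))
  have hdist : ∀ u, G'.edist b u ≤ (graph n s).edist b u :=
    edist_update_le_of_isSPT hab (Finset.subset_insert _ _) (Finset.mem_insert_self _ _) hTspt ha₁
  calc ecc (graph n s) a
      ≤ ecc G' a := hs.ecc_le_of_card_le
        ((Finset.card_insert_le _ _).trans (Finset.card_erase_add_one hbuy).le)
    _ ≤ G'.edist a b + ecc G' b := ecc_le_edist_add_ecc _ _ _
    _ ≤ 1 + ecc (graph n s) b := by rw [hG'ab]; gcongr; exact ecc_le_ecc_of_edist_le hdist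
    _ = ecc (graph n s) b + 1 := add_comm _ _

/-- the swap lemma `D(a) ≤ D(b) + 1`. -/
theorem swap_lemma (n : ℕ) (α : ℝ) (hα : 0 < α)
    (s : Fin n → Finset (Fin n)) (hs : IsEquilibrium α s)
    (a b a₁ : Fin n) (hab : a ≠ b)
    (hbuy : a₁ ∈ s a) (hadj : (graph n s).Adj a a₁)
    (hT : ∃ T : SimpleGraph (Fin n), IsSPT (graph n s) T b ∧
      (¬ T.Adj a a₁ ∨ IsParent T b a a₁)) :
    ecc (graph n s) a ≤ ecc (graph n s) b + 1 :=
  swap_lemma_general n α s hs a b a₁ hab hbuy hT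
end

section
/- Every equilibrium graph in the max-distance network creation game has no cycle of length less than α + 2. -/
/-!
Max-distance network creation game (Demaine et al.):
`n` agents, agent `v` buys edges to the agents in `s v`, each at cost `α`.
The resulting graph has an edge `(u,v)` iff `u ∈ s v` or `v ∈ s u`.
Agent `v`'s cost is `α * |s v|` plus its eccentricity (max distance, `⊤` if
disconnected). A profile is a (pure Nash) equilibrium if no agent can strictly
decrease its cost by unilaterally changing its edge set.
-/

open SimpleGraph
open scoped ENNReal

/-!
If an agent `u` buys an edge `uw` lying on a cycle of length `L`, the rest of the cycle is a
`u`–`w` walk of length `L - 1` avoiding `uw`. Hence after `u` drops the edge every distance grows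
by at most `L - 2`, and `u` saves `α`; equilibrium forces `α ≤ L - 2`.
-/

namespace SimpleGraph

variable {V : Type*} {G H : SimpleGraph V} {u w : V} {k : ℕ}

theorem edist_le_length_add_mul_count [DecidableEq V] (hH : G.deleteEdges {s(u, w)} ≤ H)
    (huw : H.edist u w ≤ k + 1) {a b : V} (p : G.Walk a b) :
    H.edist a b ≤ (p.length + k * p.edges.count s(u, w) : ℕ) := by
  induction p with
  | nil => simp
  | @cons a x b hax q ih =>
    have hstep : H.edist a x ≤ (1 + k * (if s(a, x) = s(u, w) then 1 else 0) : ℕ) := by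
      split_ifs with he
      · rcases Sym2.eq_iff.mp he with ⟨rfl, rfl⟩ | ⟨rfl, rfl⟩
        · simpa [add_comm] using huw
        · simpa [add_comm, edist_comm] using huw
      · simpa using (edist_eq_one_iff_adj.mpr (hH (by simp [hax, he]))).le
    calc H.edist a b ≤ H.edist a x + H.edist x b := H.edist_triangle
      _ ≤ _ := add_le_add hstep ih
      _ = _ := by
        simp only [Walk.edges_cons, List.count_cons, Walk.length_cons, beq_iff_eq]
        push_cast; split_ifs <;> ring

theorem edist_le_edist_add_of_deleteEdges_le (hH : G.deleteEdges {s(u, w)} ≤ H)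
    (huw : H.edist u w ≤ k + 1) (a b : V) : H.edist a b ≤ G.edist a b + k := by
  classical
  by_cases hab : G.Reachable a b
  · obtain ⟨p, hp, hlen⟩ := hab.exists_path_of_dist
    have hcount : p.edges.count s(u, w) ≤ 1 :=
      List.nodup_iff_count_le_one.mp hp.isTrail.edges_nodup _
    calc H.edist a b ≤ (p.length + k * p.edges.count s(u, w) : ℕ) :=
          edist_le_length_add_mul_count hH huw p
      _ ≤ (p.length + k : ℕ) := by gcongr; exact mul_le_of_le_one_right (Nat.zero_le k) hcount
      _ = G.edist a b + k := by rw [Nat.cast_add, hlen, hab.coe_dist_eq_edist]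
  · simp [edist_eq_top_of_not_reachable hab]

end SimpleGraph

namespace NCG

variable {n : ℕ} {α : ℝ} {s : Fin n → Finset (Fin n)}

theorem ecc_le_ecc_add {G H : SimpleGraph (Fin n)} {v : Fin n} {k : ℕ}
    (h : ∀ x, H.edist v x ≤ G.edist v x + k) : ecc H v ≤ ecc G v + k :=
  iSup_le fun x => (h x).trans (add_le_add_left (le_iSup (G.edist v ·) x) _)

theorem deleteEdges_graph_le_graph_update_erase (s : Fin n → Finset (Fin n)) (u w : Fin n) :
    (graph n s).deleteEdges {s(u, w)} ≤ graph n (Function.update s u ((s u).erase w)) := by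
  intro a b hab
  simp only [deleteEdges_adj, graph, fromRel_adj, Set.mem_singleton_iff, Sym2.eq_iff] at hab ⊢
  obtain ⟨⟨hne, hab⟩, hne'⟩ := hab
  refine ⟨hne, ?_⟩
  by_cases ha : a = u <;> by_cases hb : b = u <;> simp_all

/-- Deviating to buy every edge gives eccentricity at most one, so equilibrium costs are finite. -/
theorem IsEquilibrium.ecc_ne_top (hs : IsEquilibrium α s) (u : Fin n) :
    ecc (graph n s) u ≠ ⊤ := by
  have hstar : ecc (graph n (Function.update s u Finset.univ)) u ≤ 1 :=
    iSup_le fun x => edist_le_one_iff_adj_or_eq.mpr <| by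
      by_cases hx : u = x <;> simp [graph, hx]
  have hstar_cost : cost α (Function.update s u Finset.univ) u ≠ ⊤ :=
    ENNReal.add_ne_top.mpr ⟨ENNReal.mul_ne_top ENNReal.ofReal_ne_top (ENNReal.natCast_ne_top _),
      ne_top_of_le_ne_top ENNReal.one_ne_top (by exact_mod_cast ENat.toENNReal_le.mpr hstar)⟩
  have hcost : cost α s u ≠ ⊤ := ne_top_of_le_ne_top hstar_cost (hs u Finset.univ)
  exact ENat.toENNReal_ne_top.mp (ENNReal.add_ne_top.mp hcost).2

theorem IsEquilibrium.le_of_ecc_update_erase_le (hs : IsEquilibrium α s) {u w : Fin n}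
    (hw : w ∈ s u) {k : ℕ}
    (hk : ecc (graph n (Function.update s u ((s u).erase w))) u ≤ ecc (graph n s) u + k) :
    α ≤ k := by
  set A := ENNReal.ofReal α
  set c := ((s u).erase w).card
  set E := (ecc (graph n s) u : ℝ≥0∞)
  have hE : E ≠ ⊤ := ENat.toENNReal_ne_top.mpr (hs.ecc_ne_top u)
  have hdev := hs u ((s u).erase w)
  rw [cost, cost, Function.update_self, ← Finset.card_erase_add_one hw] at hdev
  have hk' := ENat.toENNReal_le.mpr hk
  rw [ENat.toENNReal_add, ENat.toENNReal_coe] at hk'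
  have : (A * c + E) + A ≤ (A * c + E) + k :=
    calc (A * c + E) + A = A * (c + 1 : ℕ) + E := by push_cast; ring
      _ ≤ A * c + ecc (graph n (Function.update s u ((s u).erase w))) u := hdev
      _ ≤ A * c + (E + k) := by gcongr
      _ = (A * c + E) + k := by ring
  rw [ENNReal.add_le_add_iff_left (by finiteness)] at this
  exact ENNReal.ofReal_le_natCast.mp this

theorem IsEquilibrium.add_one_le_length_of_notMem_edges (hs : IsEquilibrium α s) {u w : Fin n}
    (hw : w ∈ s u) (huw : u ≠ w) (p : (graph n s).Walk u w) (hp : s(u, w) ∉ p.edges) :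
    α + 1 ≤ p.length := by
  obtain ⟨k, hk⟩ := Nat.exists_eq_add_one_of_ne_zero fun h =>
    huw (Walk.eq_of_length_eq_zero (p := p) h)
  have hle := deleteEdges_graph_le_graph_update_erase s u w
  have hdetour : (graph n (Function.update s u ((s u).erase w))).edist u w ≤ k + 1 :=
    (edist_le ((p.toDeleteEdge _ hp).mapLe hle)).trans_eq (by simp [hk])
  have := hs.le_of_ecc_update_erase_le hw
    (ecc_le_ecc_add fun x => edist_le_edist_add_of_deleteEdges_le hle hdetour u x)
  rw [hk]; push_cast; linarith

end NCG

open NCG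
theorem no_short_cycle_general (n : ℕ) (α : ℝ)
    (s : Fin n → Finset (Fin n)) (hs : IsEquilibrium α s) :
    ∀ (v : Fin n) (c : (graph n s).Walk v v), c.IsCycle → ¬ ((c.length : ℝ) < α + 2) := by
  intro v c hc
  cases c with
  | nil => exact absurd hc Walk.not_isCycle_nil
  | @cons _ x _ hvx q =>
    obtain ⟨-, hq⟩ := (Walk.cons_isCycle_iff q hvx).mp hc
    rw [Walk.length_cons, not_lt]
    push_cast
    rcases hvx.2 with hx | hv
    · have := hs.add_one_le_length_of_notMem_edges hx hvx.ne q.reverse (by simpa using hq)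
      rw [Walk.length_reverse] at this
      linarith
    · have := hs.add_one_le_length_of_notMem_edges hv hvx.ne.symm q (by rwa [Sym2.eq_swap])
      linarith

/-- every equilibrium graph has no cycle of length less than `α + 2`. -/
theorem no_short_cycle (n : ℕ) (α : ℝ) (hα : 0 < α)
    (s : Fin n → Finset (Fin n)) (hs : IsEquilibrium α s) :
    ∀ (v : Fin n) (c : (graph n s).Walk v v), c.IsCycle → ¬ ((c.length : ℝ) < α + 2) :=
  no_short_cycle_general n α s hs
end

section
/- If G is a non-tree equilibrium graph and H is a biconnected component of G (with more than two vertices), then every edge e of H is contained in some min cycle of H. -/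
/-!
Max-distance network creation game (Demaine et al.):
`n` agents, agent `v` buys edges to the agents in `s v`, each at cost `α`.
The resulting graph has an edge `(u,v)` iff `u ∈ s v` or `v ∈ s u`.
Agent `v`'s cost is `α * |s v|` plus its eccentricity (max distance, `⊤` if
disconnected). A profile is a (pure Nash) equilibrium if no agent can strictly
decrease its cost by unilaterally changing its edge set.
-/

open SimpleGraph
open scoped ENNReal

open NCG

/-!
Let `p` be a shortest `v`–`u` walk avoiding the edge `uv`; it exists because `B` stays connected
after deleting `u` or `v`, and it is a path, so `c = uv + p` is a cycle. A walk between two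
vertices of `p` that avoids `uv` is at least as long as the stretch of `p` between them, since
splicing it into `p` would otherwise give a shorter walk avoiding `uv`; a shortest path that does
use `uv` splits there into two such walks. Hence distances along `c` are distances in `G`.
Finally, adding to `B` a path between two of its vertices keeps it biconnected, so by maximality
`p` already lies in `B`.
-/

namespace SimpleGraph

variable {V : Type*} {G : SimpleGraph V} {a b x y : V}

lemma Walk.edist_spanningCoe_toSubgraph_le (p : G.Walk a b) {q : G.Walk x y}
    (hq : q.edges ⊆ p.edges) : p.toSubgraph.spanningCoe.edist x y ≤ q.length := by
  have hq' : ∀ e ∈ q.edges, e ∈ p.toSubgraph.spanningCoe.edgeSet := fun e he => by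
    simpa using hq he
  simpa using (q.transfer _ hq').edist_le

lemma Walk.exists_isSubwalk_of_mem_support {p : G.Walk a b} (hx : x ∈ p.support)
    (hy : y ∈ p.support) :
    (∃ q : G.Walk x y, q.IsSubwalk p) ∨ ∃ q : G.Walk y x, q.IsSubwalk p := by
  classical
  rw [← p.take_spec hx, Walk.mem_support_append_iff] at hy
  rcases hy with hy | hy
  · exact .inr ⟨_, ((p.takeUntil x hx).isSubwalk_dropUntil hy).trans (p.isSubwalk_takeUntil hx)⟩
  · exact .inl ⟨_, ((p.dropUntil x hx).isSubwalk_takeUntil hy).trans (p.isSubwalk_dropUntil hx)⟩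

lemma Reachable.exists_walk_of_induce {s : Set V} {a b : s} (h : (G.induce s).Reachable a b) :
    ∃ q : G.Walk a b, ∀ z ∈ q.support, z ∈ s := by
  obtain ⟨q⟩ := h
  have hq : ∀ z ∈ (q.map (Embedding.induce s).toHom).support, z ∈ s := by
    intro z hz
    rw [Walk.support_map, List.mem_map] at hz
    obtain ⟨z', -, rfl⟩ := hz
    exact z'.2
  exact ⟨_, hq⟩

lemma Walk.IsPath.exists_walk_from_end_not_mem_support {p : G.Walk a b} (hp : p.IsPath) {z w : V}
    (hz : z ∈ p.support) (hwz : w ≠ z) :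
    ∃ t, (t = a ∨ t = b) ∧ ∃ q : G.Walk t z, w ∉ q.support ∧ q.support ⊆ p.support := by
  classical
  by_cases hw : w ∈ (p.takeUntil z hz).support
  · refine ⟨b, .inr rfl, (p.dropUntil z hz).reverse, fun hw' => ?_, ?_⟩
    · have hnd := hp.support_nodup
      rw [← p.take_spec hz, support_append] at hnd
      rw [support_reverse, List.mem_reverse, ← cons_tail_support] at hw'
      exact List.disjoint_of_nodup_append hnd hw ((List.mem_cons.mp hw').resolve_left hwz)
    · rw [support_reverse]
      exact fun x hx => (p.isSubwalk_dropUntil hz).support_subset (List.mem_reverse.mp hx)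
  · exact ⟨a, .inl rfl, p.takeUntil z hz, hw, (p.isSubwalk_takeUntil hz).support_subset⟩

variable {e : Sym2 V}

lemma exists_isPath_forall_length_le (h : ∃ q : G.Walk a b, e ∉ q.edges) :
    ∃ p : G.Walk a b, p.IsPath ∧ e ∉ p.edges ∧
      ∀ r : G.Walk a b, e ∉ r.edges → p.length ≤ r.length := by
  classical
  have hex : ∃ m, ∃ q : G.Walk a b, e ∉ q.edges ∧ q.length = m := by
    obtain ⟨q, hq⟩ := h
    exact ⟨_, q, hq, rfl⟩
  obtain ⟨q, hq, hlen⟩ := Nat.find_spec hex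
  refine ⟨q.bypass, q.bypass_isPath, fun he => hq (q.edges_bypass_subset_edges he), fun r hr => ?_⟩
  have := Nat.find_min' hex ⟨r, hr, rfl⟩
  have := q.length_bypass_le_length
  omega

lemma Walk.IsSubwalk.length_le_of_forall_length_le {p : G.Walk a b} {q : G.Walk x y}
    (hq : q.IsSubwalk p) (hp : e ∉ p.edges)
    (hmin : ∀ r : G.Walk a b, e ∉ r.edges → p.length ≤ r.length)
    (r : G.Walk x y) (hr : e ∉ r.edges) : q.length ≤ r.length := by
  obtain ⟨A, C, rfl⟩ := hq
  have := hmin ((A.append r).append C) (by simp_all [Walk.edges_append])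
  simp only [Walk.length_append] at this
  omega

lemma Walk.edist_spanningCoe_toSubgraph_le_of_forall_length_le {p : G.Walk a b}
    (hp : e ∉ p.edges) (hmin : ∀ r : G.Walk a b, e ∉ r.edges → p.length ≤ r.length)
    (hx : x ∈ p.support) (hy : y ∈ p.support) (r : G.Walk x y) (hr : e ∉ r.edges) :
    p.toSubgraph.spanningCoe.edist x y ≤ r.length := by
  rcases exists_isSubwalk_of_mem_support hx hy with ⟨q, hq⟩ | ⟨q, hq⟩
  · exact (p.edist_spanningCoe_toSubgraph_le hq.edges_subset).trans
      (by exact_mod_cast hq.length_le_of_forall_length_le hp hmin r hr)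
  · rw [edist_comm, ← r.length_reverse]
    exact (p.edist_spanningCoe_toSubgraph_le hq.edges_subset).trans
      (by exact_mod_cast hq.length_le_of_forall_length_le hp hmin r.reverse (by simpa using hr))

section ShortestCycle

variable {u v : V} (h : G.Adj u v) {p : G.Walk v u} (hp : s(u, v) ∉ p.edges)
  (hmin : ∀ r : G.Walk v u, s(u, v) ∉ r.edges → p.length ≤ r.length)
include h hp hmin

lemma Walk.edist_spanningCoe_toSubgraph_cons_le_of_not_mem_edges (hx : x ∈ p.support)
    (hy : y ∈ p.support) (r : G.Walk x y) (hr : s(u, v) ∉ r.edges) :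
    (cons h p).toSubgraph.spanningCoe.edist x y ≤ r.length :=
  (edist_anti (Subgraph.spanningCoe_le_of_le (by simp))).trans
    (edist_spanningCoe_toSubgraph_le_of_forall_length_le hp hmin hx hy r hr)

lemma Walk.edist_spanningCoe_toSubgraph_cons_le_of_isTrail (hx : x ∈ p.support)
    (hy : y ∈ p.support) {r : G.Walk x y} (hr : r.IsTrail) :
    (cons h p).toSubgraph.spanningCoe.edist x y ≤ r.length := by
  set H := (cons h p).toSubgraph.spanningCoe
  by_cases he : s(u, v) ∈ r.edges
  swap
  · exact edist_spanningCoe_toSubgraph_cons_le_of_not_mem_edges h hp hmin hx hy r he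
  have through_edge : ∀ {a b} (h' : G.Adj a b), s(a, b) = s(u, v) →
      h'.toWalk.IsSubwalk r → H.edist x y ≤ r.length := by
    rintro a b h' hab ⟨A, C, rfl⟩
    have hnodup := hr.edges_nodup
    simp only [edges_append, Adj.toWalk, edges_cons, edges_nil, hab, List.nodup_append] at hnodup
    have hA : s(u, v) ∉ A.edges := by grind
    have hC : s(u, v) ∉ C.edges := by grind
    have hab_mem : a ∈ p.support ∧ b ∈ p.support := by
      rcases Sym2.eq_iff.mp hab with ⟨rfl, rfl⟩ | ⟨rfl, rfl⟩
      exacts [⟨p.end_mem_support, p.start_mem_support⟩, ⟨p.start_mem_support, p.end_mem_support⟩]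
    have hHab : H.edist a b ≤ 1 := by
      refine edist_le_one_iff_adj_or_eq.mpr (.inl ?_)
      change (cons h p).toSubgraph.Adj a b
      rw [adj_toSubgraph_iff_mem_edges, hab, edges_cons]
      exact List.mem_cons_self
    calc H.edist x y ≤ H.edist x a + H.edist a b + H.edist b y :=
          SimpleGraph.edist_triangle.trans (add_le_add_left SimpleGraph.edist_triangle _)
      _ ≤ A.length + 1 + C.length := by
          gcongr
          · exact edist_spanningCoe_toSubgraph_cons_le_of_not_mem_edges h hp hmin hx hab_mem.1 A hA
          · exact edist_spanningCoe_toSubgraph_cons_le_of_not_mem_edges h hp hmin hab_mem.2 hy C hC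
      _ = _ := by simp [Adj.toWalk]
  rcases (isSubwalk_toWalk_iff_mem_edges h).mpr he with h₁ | h₁
  exacts [through_edge h rfl h₁, through_edge h.symm Sym2.eq_swap h₁]

theorem Walk.edist_spanningCoe_toSubgraph_cons_eq (hx : x ∈ (cons h p).support)
    (hy : y ∈ (cons h p).support) :
    (cons h p).toSubgraph.spanningCoe.edist x y = G.edist x y := by
  have mem_p : ∀ {z}, z ∈ (cons h p).support → z ∈ p.support := fun hz =>
    (List.mem_cons.mp hz).elim (· ▸ p.end_mem_support) id
  refine le_antisymm ?_ (edist_anti (Subgraph.spanningCoe_le _))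
  by_cases hxy : G.Reachable x y
  · obtain ⟨P, hP, hPlen⟩ := hxy.exists_path_of_dist
    rw [← hxy.coe_dist_eq_edist, ← hPlen]
    exact edist_spanningCoe_toSubgraph_cons_le_of_isTrail h hp hmin (mem_p hx) (mem_p hy) hP.isTrail
  · simp [edist_eq_top_of_not_reachable hxy]

end ShortestCycle

end SimpleGraph

namespace NCG

variable {n : ℕ} {G : SimpleGraph (Fin n)} {B : Finset (Fin n)}

lemma IsBiconnected.connected_induce_sdiff (hB : IsBiconnected G B) (w : Fin n) :
    (G.induce ((B : Set (Fin n)) \ {w})).Connected := by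
  by_cases hw : w ∈ B
  · exact hB.2 w hw
  obtain ⟨a, ha, b, hb, c, hc, hab, hac, hbc⟩ := Finset.two_lt_card.mp hB.1
  have hcover : (B : Set (Fin n)) \ {w} = ((B : Set (Fin n)) \ {a}) ∪ ((B : Set (Fin n)) \ {b}) := by
    ext z
    simp only [Set.mem_sdiff, Set.mem_union, Finset.mem_coe, Set.mem_singleton_iff]
    grind
  rw [hcover]
  exact induce_union_connected (hB.2 a ha).preconnected (hB.2 b hb).preconnected
    ⟨c, by simp [hc, hac.symm, hbc.symm]⟩

lemma IsBiconnected.exists_walk_not_mem_edges (hB : IsBiconnected G B) {u v : Fin n}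
    (hu : u ∈ B) (hv : v ∈ B) (huv : u ≠ v) : ∃ q : G.Walk v u, s(u, v) ∉ q.edges := by
  obtain ⟨c, hc, hcu, hcv⟩ : ∃ c ∈ B, c ≠ u ∧ c ≠ v := by
    obtain ⟨a, ha, b, hb, c, hc, hab, hac, hbc⟩ := Finset.two_lt_card.mp hB.1
    grind
  obtain ⟨q₁, hq₁⟩ := ((hB.2 u hu).preconnected ⟨v, hv, huv.symm⟩ ⟨c, hc, hcu⟩).exists_walk_of_induce
  obtain ⟨q₂, hq₂⟩ := ((hB.2 v hv).preconnected ⟨c, hc, hcv⟩ ⟨u, hu, huv⟩).exists_walk_of_induce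
  refine ⟨q₁.append q₂, fun he => ?_⟩
  rcases List.mem_append.mp (Walk.edges_append q₁ q₂ ▸ he) with he | he
  · exact (hq₁ u (q₁.fst_mem_support_of_mem_edges he)).2 rfl
  · exact (hq₂ v (q₂.snd_mem_support_of_mem_edges he)).2 rfl

lemma IsBiconnected.union_support (hB : IsBiconnected G B) {a b : Fin n} {p : G.Walk a b}
    (hp : p.IsPath) (ha : a ∈ B) (hb : b ∈ B) : IsBiconnected G (B ∪ p.support.toFinset) := by
  refine ⟨hB.1.trans_le (Finset.card_le_card Finset.subset_union_left), fun w _ => ?_⟩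
  have hT := hB.connected_induce_sdiff w
  obtain ⟨⟨β, hβ⟩⟩ := hT.nonempty
  have hTS : (B : Set (Fin n)) \ {w} ⊆ ↑(B ∪ p.support.toFinset) \ {w} :=
    Set.sdiff_subset_sdiff_left (by simp)
  refine induce_connected_of_patches β (hTS hβ) fun {z} hz => ?_
  simp only [Finset.coe_union, List.coe_toFinset, Set.mem_sdiff, Set.mem_union, Finset.mem_coe,
    Set.mem_ofPred_eq, Set.mem_singleton_iff] at hz
  obtain ⟨hzB | hzp, hzw⟩ := hz
  · exact ⟨_, hTS, hβ, ⟨hzB, hzw⟩, hT.preconnected _ _⟩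
  obtain ⟨t, ht, q, hwq, hqp⟩ := hp.exists_walk_from_end_not_mem_support hzp (Ne.symm hzw)
  have htB : t ∈ B := by rcases ht with rfl | rfl <;> assumption
  have htw : t ≠ w := fun h => hwq (h ▸ q.start_mem_support)
  have hqS : {x | x ∈ q.support} ⊆ ↑(B ∪ p.support.toFinset) \ {w} := fun x hx =>
    ⟨by simp [hqp hx], fun h => hwq (by rwa [Set.mem_singleton_iff.mp h] at hx)⟩
  exact ⟨_, Set.union_subset hTS hqS, .inl hβ, .inr q.end_mem_support,
    (induce_union_connected hT.preconnected q.connected_induce_support.preconnected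
      ⟨t, ⟨htB, htw⟩, q.start_mem_support⟩).preconnected _ _⟩

lemma IsBicomp.support_subset (hB : IsBicomp G B) {a b : Fin n} {p : G.Walk a b}
    (hp : p.IsPath) (ha : a ∈ B) (hb : b ∈ B) : ∀ z ∈ p.support, z ∈ B := by
  intro z hz
  rw [← hB.2 _ Finset.subset_union_left (hB.1.union_support hp ha hb)]
  simp [hz]

end NCG

theorem edge_in_min_cycle_general (n : ℕ) (s : Fin n → Finset (Fin n))
    (B : Finset (Fin n)) (hB : IsBicomp (graph n s) B)
    (u v : Fin n) (hu : u ∈ B) (hv : v ∈ B) (huv : (graph n s).Adj u v) :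
    ∃ (w : Fin n) (c : (graph n s).Walk w w), IsMinCycle (graph n s) c ∧
      (∀ x ∈ c.support, x ∈ B) ∧ s(u, v) ∈ c.edges := by
  obtain ⟨p, hp, hpe, hmin⟩ :=
    exists_isPath_forall_length_le (hB.1.exists_walk_not_mem_edges hu hv huv.ne)
  refine ⟨u, .cons huv p, ⟨(Walk.cons_isCycle_iff p huv).mpr ⟨hp, hpe⟩,
    fun x hx y hy => Walk.edist_spanningCoe_toSubgraph_cons_eq huv hpe hmin hx hy⟩, ?_, by simp⟩
  intro x hx
  rcases List.mem_cons.mp hx with rfl | hx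
  exacts [hu, hB.support_subset hp hv hu x hx]

/-- every edge of a biconnected component lies on a min cycle of
the component. -/
theorem edge_in_min_cycle (n : ℕ) (α : ℝ) (hα : 0 < α)
    (s : Fin n → Finset (Fin n)) (hs : IsEquilibrium α s)
    (hnt : ¬ (graph n s).IsTree)
    (B : Finset (Fin n)) (hB : IsBicomp (graph n s) B)
    (u v : Fin n) (hu : u ∈ B) (hv : v ∈ B) (huv : (graph n s).Adj u v) :
    ∃ (w : Fin n) (c : (graph n s).Walk w w), IsMinCycle (graph n s) c ∧
      (∀ x ∈ c.support, x ∈ B) ∧ s(u, v) ∈ c.edges :=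
  edge_in_min_cycle_general n s B hB u v hu hv huv
end

section
/- For α > 1, in an equilibrium graph G of the max-distance network creation game, fix a shortest path tree T rooted at a central vertex v₀ (a vertex with D(v₀) = rad(G)). Then every vertex buys at most one edge not contained in T. -/
/-!
Max-distance network creation game (Demaine et al.):
`n` agents, agent `v` buys edges to the agents in `s v`, each at cost `α`.
The resulting graph has an edge `(u,v)` iff `u ∈ s v` or `v ∈ s u`.
Agent `v`'s cost is `α * |s v|` plus its eccentricity (max distance, `⊤` if
disconnected). A profile is a (pure Nash) equilibrium if no agent can strictly
decrease its cost by unilaterally changing its edge set.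
-/

open SimpleGraph
open scoped ENNReal

namespace SimpleGraph

variable {V : Type*} {G G' : SimpleGraph V}

lemma eccent_anti (h : G ≤ G') (u : V) : G'.eccent u ≤ G.eccent u :=
  iSup_mono fun _ ↦ edist_anti h

lemma eccent_le_edist_add_eccent (u v : V) : G.eccent u ≤ G.edist u v + G.eccent v :=
  (eccent_le_iff u _).2 fun _ ↦ G.edist_triangle.trans (add_le_add_right edist_le_eccent _)

end SimpleGraph

namespace NCG

variable {n : ℕ}

lemma graph_adj (s : Fin n → Finset (Fin n)) (u v : Fin n) :
    (graph n s).Adj u v ↔ u ≠ v ∧ (v ∈ s u ∨ u ∈ s v) :=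
  fromRel_adj ..

lemma edist_graph_le_one {s : Fin n → Finset (Fin n)} {u v : Fin n} (h : v ∈ s u) :
    (graph n s).edist u v ≤ 1 := by
  rw [edist_le_one_iff_adj_or_eq, graph_adj]
  tauto

lemma le_graph_update {s : Fin n → Finset (Fin n)} {H : SimpleGraph (Fin n)}
    (hH : H ≤ graph n s) {u : Fin n} {t : Finset (Fin n)}
    (ht : ∀ w ∈ s u, H.Adj u w → w ∈ t) : H ≤ graph n (Function.update s u t) := by
  intro a b hab
  obtain ⟨hne, hba | hab'⟩ := (graph_adj s a b).1 (hH hab)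
  · refine (graph_adj _ a b).2 ⟨hne, .inl ?_⟩
    rcases eq_or_ne a u with rfl | ha
    · simpa using ht b hba hab
    · simpa [ha] using hba
  · refine (graph_adj _ a b).2 ⟨hne, .inr ?_⟩
    rcases eq_or_ne b u with rfl | hb
    · simpa using ht a hab' hab.symm
    · simpa [hb] using hab'

lemma IsSPT.eccent_eq {G T : SimpleGraph (Fin n)} {b : Fin n} (h : IsSPT G T b) :
    T.eccent b = G.eccent b :=
  iSup_congr h.2.2

lemma IsEquilibrium.ofReal_mul_card_le_of_ecc_le {α : ℝ} {s : Fin n → Finset (Fin n)}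
    (hs : IsEquilibrium α s) (hrad : radius (graph n s) ≠ ⊤) {u : Fin n} {t : Finset (Fin n)}
    {d : ℕ} (ht : ecc (graph n (Function.update s u t)) u ≤ d + radius (graph n s)) :
    ENNReal.ofReal α * (s u).card ≤ ENNReal.ofReal α * t.card + d := by
  set r : ℝ≥0∞ := ENat.toENNReal (radius (graph n s))
  have hr : r ≠ ⊤ := ENat.toENNReal_ne_top.2 hrad
  have hru : r ≤ ecc (graph n s) u := ENat.toENNReal_le.2 radius_le_eccent
  have ht' : (ecc (graph n (Function.update s u t)) u : ℝ≥0∞) ≤ d + r := by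
    simpa [r] using ENat.toENNReal_le.2 ht
  refine (ENNReal.add_le_add_iff_right hr).1 ?_
  calc ENNReal.ofReal α * (s u).card + r
      ≤ cost α s u := add_le_add_right hru _
    _ ≤ cost α (Function.update s u t) u := hs u t
    _ ≤ ENNReal.ofReal α * t.card + d + r := by
      rw [cost, Function.update_self, add_assoc]
      exact add_le_add_right ht' _

end NCG

open NCG
/-- for `α > 1`, w.r.t. a shortest path tree rooted at a central
vertex, every vertex buys at most one non-tree edge. -/
theorem at_most_one_nontree_edge (n : ℕ) (α : ℝ) (hα : 1 < α)
    (s : Fin n → Finset (Fin n)) (hs : IsEquilibrium α s)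
    (T : SimpleGraph (Fin n)) (v₀ : Fin n)
    (hT : IsSPT (graph n s) T v₀) (hcentral : ecc (graph n s) v₀ = NCG.radius (graph n s)) :
    ∀ u : Fin n, {w : Fin n | w ∈ s u ∧ w ≠ u ∧ ¬ T.Adj u w}.ncard ≤ 1 := by
  intro u
  by_contra! htwo
  obtain ⟨w₁, w₂, ⟨hw₁s, -, hw₁T⟩, ⟨hw₂s, -, hw₂T⟩, hne⟩ :=
    (Set.one_lt_ncard_iff (Set.toFinite _)).1 htwo
  -- Replacing both by one edge to `v₀` keeps `T`, so `u`'s eccentricity becomes at most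
  -- `1 + rad`, while `u` saves `α > 1`.
  set t := insert v₀ (((s u).erase w₁).erase w₂)
  have hcard : t.card + 1 ≤ (s u).card := by
    have hw₂ : w₂ ∈ (s u).erase w₁ := Finset.mem_erase.2 ⟨hne.symm, hw₂s⟩
    have hins : t.card ≤ (((s u).erase w₁).erase w₂).card + 1 := Finset.card_insert_le _ _
    rw [Finset.card_erase_of_mem hw₂, Finset.card_erase_of_mem hw₁s] at hins
    have := Finset.one_lt_card.2 ⟨w₁, hw₁s, w₂, hw₂s, hne⟩
    omega
  have hTle : T ≤ graph n (Function.update s u t) :=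
    le_graph_update hT.1 fun w hw hTw ↦ Finset.mem_insert_of_mem <| Finset.mem_erase.2
      ⟨by rintro rfl; exact hw₂T hTw, Finset.mem_erase.2 ⟨by rintro rfl; exact hw₁T hTw, hw⟩⟩
  have hecc : ecc (graph n (Function.update s u t)) u ≤ (1 : ℕ) + NCG.radius (graph n s) :=
    calc _ ≤ _ := eccent_le_edist_add_eccent u v₀
      _ ≤ 1 + T.eccent v₀ :=
        add_le_add (edist_graph_le_one (by simp [t])) (eccent_anti hTle v₀)
      _ = _ := by rw [hT.eccent_eq]; exact congrArg _ hcentral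
  have : Nonempty (Fin n) := ⟨u⟩
  have hrad : NCG.radius (graph n s) ≠ ⊤ := radius_ne_top_iff.2 (hT.2.1.connected.mono hT.1)
  have hsave := hs.ofReal_mul_card_le_of_ecc_le hrad hecc
  have hle : ENNReal.ofReal α * t.card + ENNReal.ofReal α ≤ ENNReal.ofReal α * t.card + 1 :=
    calc _ = ENNReal.ofReal α * ((t.card + 1 : ℕ) : ℝ≥0∞) := by push_cast; ring
      _ ≤ ENNReal.ofReal α * (s u).card := by gcongr
      _ ≤ _ := by simpa using hsave
  have := (ENNReal.add_le_add_iff_left (by finiteness)).1 hle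
  exact (ENNReal.one_lt_ofReal.2 hα).not_ge this
end
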